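/- There exists a constant C > 0 such that for every positive even integer n and every integer x with 0.454·n < x ≤ 0.45537·n, one has q(x,n)/(3n−1)!! ≤ C · n⁶ · M^n, where M = sup{ h(χ,ζ,ξ) : (χ,ζ,ξ) ∈ Ω }. -/

import Mathlib

/-- The function `f(χ,ζ)` (real exponentiation, with the convention `0^0 = 1`). -/
noncomputable def ffun (χ ζ : ℝ) : ℝ :=
  ((3 : ℝ) ^ (1 / 2 - 4 * χ + 2 * ζ)
      * (1 - 2 * χ - 2 * ζ) ^ (1 - 2 * χ - 2 * ζ)
      * (1 - 2 * χ + 4 * ζ) ^ (1 - 2 * χ + 4 * ζ)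
      * (6 * χ - 3 / 2 + 3 * ζ) ^ (6 * χ - 3 / 2 + 3 * ζ)
      * (6 * χ - 3 / 2 - 9 * ζ) ^ (6 * χ - 3 / 2 - 9 * ζ)) /
    ((2 * χ + ζ - 1 / 2) ^ (2 * χ + ζ - 1 / 2)
      * (2 : ℝ) ^ (1 - 2 * χ + ζ)
      * (1 / 2 - χ - ζ) ^ (1 / 2 - χ - ζ)
      * (1 / 2 - χ + 2 * ζ) ^ (1 / 2 - χ + 2 * ζ)
      * (2 * χ - 3 * ζ - 1 / 2) ^ (2 * χ - 3 * ζ - 1 / 2))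

/-- The function `g(χ,ζ,ξ)` (real exponentiation, with the convention `0^0 = 1`). -/
noncomputable def gfun (χ ζ ξ : ℝ) : ℝ :=
  ((2 : ℝ) ^ (2 * ξ) * (1 / 1.618) ^ ξ) /
    (ξ ^ ξ
      * (1 - 2 * χ - 2 * ζ - ξ) ^ (1 - 2 * χ - 2 * ζ - ξ)
      * (1 - 2 * χ + 4 * ζ - ξ) ^ (1 - 2 * χ + 4 * ζ - ξ)
      * (10 * χ - 7 / 2 - 5 * ζ + ξ) ^ (10 * χ - 7 / 2 - 5 * ζ + ξ))

/-- The function `h(χ,ζ,ξ) = f(χ,ζ) · g(χ,ζ,ξ)`. -/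
noncomputable def hfun (χ ζ ξ : ℝ) : ℝ := ffun χ ζ * gfun χ ζ ξ

/-- The domain `Ω`. -/
def Omega : Set (ℝ × ℝ × ℝ) :=
  {p | 0.454 < p.1 ∧ p.1 ≤ 0.45537 ∧ 0 ≤ p.2.1 ∧ p.2.1 ≤ 1 / 2 - p.1 ∧
    0 ≤ p.2.2 ∧ p.2.2 ≤ 1 - 2 * p.1 - 2 * p.2.1}
/-- The quantity `q(x,n)` from Lemma 8 (all subtractions below are truncated natural
subtraction; for `0.454·n < x ≤ 0.45537·n` and indices in the given ranges every
subtraction is of a nonnegative quantity). -/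
noncomputable def qfun (x n : ℕ) : ℝ :=
  ∑ i ∈ Finset.range (n / 2 - x + 1), ∑ j ∈ Finset.range (n - 2 * x - 2 * i + 1),
    (n.choose (n / 2 - i) : ℝ) *
      (((n / 2 - i).factorial : ℝ) * (3 : ℝ) ^ (n - 2 * x - 2 * i) /
        (((2 * x + i - n / 2).factorial : ℝ) * (2 : ℝ) ^ (n / 2 - x - i) *
          ((n / 2 - x - i).factorial : ℝ))) *
      (((n / 2 + i).factorial : ℝ) * (3 : ℝ) ^ (n - 2 * x + 4 * i) /
        (((2 * x - 3 * i - n / 2).factorial : ℝ) * (2 : ℝ) ^ (n / 2 - x + 2 * i) *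
          ((n / 2 - x + 2 * i).factorial : ℝ))) *
      ((n - 2 * i - 2 * x).choose j : ℝ) * ((n - 2 * x + 4 * i).choose j : ℝ) *
      (2 : ℝ) ^ (2 * j) * (j.factorial : ℝ) * (1 / 1.618 : ℝ) ^ j *
      (((3 * (2 * x - n / 2 - 3 * i)).factorial : ℝ) *
          ((3 * (2 * x - n / 2 + i)).factorial : ℝ) /
        ((3 * (2 * x - n / 2 - 3 * i) - 2 * (n - 2 * i - 2 * x) + j).factorial : ℝ))

/-- The supremum `M = sup { h(χ,ζ,ξ) : (χ,ζ,ξ) ∈ Ω }`. -/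
noncomputable def Msup : ℝ := sSup {y : ℝ | ∃ p ∈ Omega, hfun p.1 p.2.1 p.2.2 = y}

/-!
Substituting `n = 4u + 2s + 10i` and `x = u + s + 4i` turns every truncated subtraction in the
summand of `q(x, n)` into a sum of naturals. Divided by `(3n - 1)‼ = (3n)! / (2 ^ (3n/2) (3n/2)!)`,
the summand becomes six factorials over nine with equal total weight, times powers of `2`, `3`
and `1 / 1.618`. Stirling's bounds `(k/e)^k ≤ k! ≤ e √k (k/e)^k` turn it into
`h(x/n, i/n, j/n)^n`, up to a factor `(e √(3n))^6 = 27 e^6 n^3`. The point lies in `Ω`, so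
`h ≤ M` there, and the double sum has at most `n^2` terms.
-/

open Real Nat

theorem div_exp_one_pow_le_factorial (n : ℕ) : ((n : ℝ) / exp 1) ^ n ≤ n ! := by
  have h := pow_div_factorial_le_exp (n : ℝ) n.cast_nonneg n
  rw [div_le_iff₀ (by positivity)] at h
  rw [div_pow, ← exp_nat_mul, mul_one, div_le_iff₀ (exp_pos _)]
  linarith

theorem factorial_le_exp_one_mul_sqrt {n : ℕ} (hn : n ≠ 0) :
    (n ! : ℝ) ≤ exp 1 * √n * ((n : ℝ) / exp 1) ^ n := by
  obtain ⟨k, rfl⟩ := Nat.exists_eq_succ_of_ne_zero hn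
  have hseq : Stirling.stirlingSeq (k + 1) ≤ exp 1 / √2 :=
    Stirling.stirlingSeq_one ▸ Stirling.stirlingSeq'_antitone (Nat.zero_le k)
  have hpos : (0 : ℝ) < √(2 * (k + 1 : ℕ)) * ((k + 1 : ℕ) / exp 1) ^ (k + 1) := by
    positivity
  calc ((k + 1) ! : ℝ)
      = Stirling.stirlingSeq (k + 1)
          * (√(2 * (k + 1 : ℕ)) * ((k + 1 : ℕ) / exp 1) ^ (k + 1)) :=
        (div_mul_cancel₀ _ hpos.ne').symm
    _ ≤ exp 1 / √2 * (√(2 * (k + 1 : ℕ)) * ((k + 1 : ℕ) / exp 1) ^ (k + 1)) := by gcongr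
    _ = exp 1 * √(k + 1 : ℕ) * ((k + 1 : ℕ) / exp 1) ^ (k + 1) := by
        rw [sqrt_mul zero_le_two]
        field_simp

theorem prod_factorial_le {A : List ℕ} {K : ℕ} (hK : K ≠ 0) (hA : ∀ k ∈ A, k ≤ K) :
    (A.map fun k : ℕ => (k ! : ℝ)).prod
      ≤ (exp 1 * √K) ^ A.length * (A.map fun k : ℕ => ((k : ℝ) / exp 1) ^ k).prod := by
  calc (A.map fun k : ℕ => (k ! : ℝ)).prod
      ≤ (A.map fun k : ℕ => exp 1 * √K * ((k : ℝ) / exp 1) ^ k).prod := by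
        refine List.prod_map_le_prod_map₀ _ _ (fun _ _ => by positivity) fun k hk => ?_
        rcases eq_or_ne k 0 with rfl | hk0
        · have hK1 : 1 ≤ √(K : ℝ) := one_le_sqrt.mpr (mod_cast Nat.one_le_iff_ne_zero.mpr hK)
          simpa using one_le_mul_of_one_le_of_one_le (one_le_exp zero_le_one) hK1
        · calc (k ! : ℝ) ≤ exp 1 * √k * ((k : ℝ) / exp 1) ^ k :=
                factorial_le_exp_one_mul_sqrt hk0
            _ ≤ _ := by gcongr; exact_mod_cast hA k hk
    _ = _ := by simp [List.prod_map_mul]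

noncomputable def scaledSelfPow (n k : ℕ) : ℝ := ((k : ℝ) / n) ^ k

theorem scaledSelfPow_pos (n k : ℕ) (hn : n ≠ 0) : 0 < scaledSelfPow n k := by
  rcases k with _ | k
  · simp [scaledSelfPow]
  · unfold scaledSelfPow; positivity

theorem scaledSelfPow_mul_mul (a b m : ℕ) (hm : m ≠ 0) :
    scaledSelfPow (a * m) (b * m) = ((b : ℝ) / a) ^ (b * m) := by
  rw [scaledSelfPow]
  push_cast
  rw [mul_div_mul_right _ _ (by positivity)]

theorem prod_map_div_pow_eq (A : List ℕ) (a : ℝ) {N : ℕ} (hN : N ≠ 0) :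
    (A.map fun k : ℕ => ((k : ℝ) / a) ^ k).prod
      = (A.map (scaledSelfPow N)).prod * (N / a) ^ A.sum := by
  induction A with
  | nil => simp
  | cons k A ih =>
      simp only [List.map_cons, List.prod_cons, List.sum_cons, ih, pow_add, scaledSelfPow,
        ← div_mul_div_cancel₀ (a := (k : ℝ)) (c := a) (Nat.cast_ne_zero.mpr hN), mul_pow]
      ring

/-- The factors `(N / e) ^ k` produced by Stirling's bounds cancel because `A.sum = B.sum`. -/
theorem prod_factorial_div_le {A B : List ℕ} (hsum : A.sum = B.sum) {K : ℕ} (hK : K ≠ 0)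
    (hA : ∀ k ∈ A, k ≤ K) {N : ℕ} (hN : N ≠ 0) :
    (A.map fun k : ℕ => (k ! : ℝ)).prod / (B.map fun k : ℕ => (k ! : ℝ)).prod
      ≤ (exp 1 * √K) ^ A.length
          * ((A.map (scaledSelfPow N)).prod / (B.map (scaledSelfPow N)).prod) := by
  have hB : 0 < (B.map (scaledSelfPow N)).prod :=
    List.prod_pos fun _ hx => by
      obtain ⟨k, -, rfl⟩ := List.mem_map.mp hx
      exact scaledSelfPow_pos N k hN
  have hB' : (B.map fun k : ℕ => ((k : ℝ) / exp 1) ^ k).prod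
      ≤ (B.map fun k : ℕ => (k ! : ℝ)).prod :=
    List.prod_map_le_prod_map₀ _ _ (fun _ _ => by positivity)
      fun k _ => div_exp_one_pow_le_factorial k
  rw [prod_map_div_pow_eq _ _ hN] at hB'
  calc (A.map fun k : ℕ => (k ! : ℝ)).prod / (B.map fun k : ℕ => (k ! : ℝ)).prod
      ≤ (exp 1 * √K) ^ A.length * (A.map fun k : ℕ => ((k : ℝ) / exp 1) ^ k).prod
          / ((B.map (scaledSelfPow N)).prod * (N / exp 1) ^ B.sum) :=
        div_le_div₀ (mul_nonneg (by positivity) (List.prod_nonneg fun _ hx => by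
            obtain ⟨k, -, rfl⟩ := List.mem_map.mp hx
            positivity)) (prod_factorial_le hK hA) (by positivity) hB'
    _ = _ := by
        rw [prod_map_div_pow_eq _ _ hN, hsum]
        field_simp

theorem rpow_self_pos {t : ℝ} (ht : 0 ≤ t) : 0 < t ^ t := by
  rcases ht.eq_or_lt with rfl | ht
  · simp
  · exact rpow_pos_of_pos ht t

theorem exp_neg_one_le_rpow_self {t : ℝ} (ht : 0 ≤ t) : exp (-1) ≤ t ^ t := by
  rcases ht.eq_or_lt with rfl | ht
  · simp
  · rw [rpow_def_of_pos ht, exp_le_exp]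
    have := one_sub_inv_le_log_of_pos ht
    have : t * (1 - t⁻¹) = t - 1 := by field_simp
    nlinarith

theorem rpow_self_le_exp_sq {t : ℝ} (ht : 0 ≤ t) : t ^ t ≤ exp (t ^ 2) := by
  rcases ht.eq_or_lt with rfl | ht
  · simp
  · rw [rpow_def_of_pos ht, exp_le_exp]
    nlinarith [log_le_sub_one_of_pos ht]

theorem rpow_self_pow_of_eq_div {t : ℝ} {k n : ℕ} (hn : n ≠ 0) (ht : t = k / n) :
    (t ^ t) ^ n = scaledSelfPow n k := by
  subst ht
  rw [← rpow_mul_natCast (by positivity), div_mul_cancel₀ _ (by positivity), rpow_natCast,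
    scaledSelfPow]

theorem rpow_pow_of_mul_eq {c E m : ℝ} (hc : 0 ≤ c) {n : ℕ} (h : E * n = m) :
    (c ^ E) ^ n = c ^ m := by
  rw [← rpow_mul_natCast hc, h]

section Omega

variable {χ ζ ξ : ℝ}

theorem ffun_nonneg_and_le (hχ : 0.454 < χ) (hζ₁ : 0 ≤ ζ) (hζ₂ : ζ ≤ 1 / 2 - χ) :
    0 ≤ ffun χ ζ ∧ ffun χ ζ ≤ exp 20 := by
  have hsq : ∀ t : ℝ, 0 ≤ t → t ≤ 2 → t ^ t ≤ exp 4 := fun t h0 h2 =>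
    (rpow_self_le_exp_sq h0).trans (exp_le_exp.mpr (by nlinarith))
  have n₁ : 0 ≤ 1 - 2 * χ - 2 * ζ := by linarith
  have n₂ : 0 ≤ 1 - 2 * χ + 4 * ζ := by linarith
  have n₃ : 0 ≤ 6 * χ - 3 / 2 + 3 * ζ := by linarith
  have n₄ : 0 ≤ 6 * χ - 3 / 2 - 9 * ζ := by linarith
  have d₁ : 0 ≤ 2 * χ + ζ - 1 / 2 := by linarith
  have d₂ : 0 ≤ 1 / 2 - χ - ζ := by linarith
  have d₃ : 0 ≤ 1 / 2 - χ + 2 * ζ := by linarith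
  have d₄ : 0 ≤ 2 * χ - 3 * ζ - 1 / 2 := by linarith
  have := rpow_self_pos n₁; have := rpow_self_pos n₂; have := rpow_self_pos n₃
  have := rpow_self_pos n₄; have := rpow_self_pos d₁; have := rpow_self_pos d₂
  have := rpow_self_pos d₃; have := rpow_self_pos d₄
  have hnum : (3 : ℝ) ^ (1 / 2 - 4 * χ + 2 * ζ)
      * (1 - 2 * χ - 2 * ζ) ^ (1 - 2 * χ - 2 * ζ)
      * (1 - 2 * χ + 4 * ζ) ^ (1 - 2 * χ + 4 * ζ)
      * (6 * χ - 3 / 2 + 3 * ζ) ^ (6 * χ - 3 / 2 + 3 * ζ)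
      * (6 * χ - 3 / 2 - 9 * ζ) ^ (6 * χ - 3 / 2 - 9 * ζ)
      ≤ 1 * exp 4 * exp 4 * exp 4 * exp 4 := by
    gcongr
    · exact rpow_le_one_of_one_le_of_nonpos (by norm_num) (by linarith)
    · exact hsq _ n₁ (by linarith)
    · exact hsq _ n₂ (by linarith)
    · exact hsq _ n₃ (by linarith)
    · exact hsq _ n₄ (by linarith)
  have hden : exp (-1) * 1 * exp (-1) * exp (-1) * exp (-1)
      ≤ (2 * χ + ζ - 1 / 2) ^ (2 * χ + ζ - 1 / 2)
      * (2 : ℝ) ^ (1 - 2 * χ + ζ)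
      * (1 / 2 - χ - ζ) ^ (1 / 2 - χ - ζ)
      * (1 / 2 - χ + 2 * ζ) ^ (1 / 2 - χ + 2 * ζ)
      * (2 * χ - 3 * ζ - 1 / 2) ^ (2 * χ - 3 * ζ - 1 / 2) := by
    gcongr
    · exact exp_neg_one_le_rpow_self d₁
    · exact one_le_rpow (by norm_num) (by linarith)
    · exact exp_neg_one_le_rpow_self d₂
    · exact exp_neg_one_le_rpow_self d₃
    · exact exp_neg_one_le_rpow_self d₄
  refine ⟨by unfold ffun; positivity,
    (div_le_div₀ (by positivity) hnum (by positivity) hden).trans_eq ?_⟩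
  simp only [one_mul, mul_one, ← exp_add, ← exp_sub]
  norm_num

theorem gfun_nonneg_and_le (hχ : 0.454 < χ) (hζ₁ : 0 ≤ ζ) (hζ₂ : ζ ≤ 1 / 2 - χ)
    (hξ₁ : 0 ≤ ξ) (hξ₂ : ξ ≤ 1 - 2 * χ - 2 * ζ) :
    0 ≤ gfun χ ζ ξ ∧ gfun χ ζ ξ ≤ 4 * exp 4 := by
  have d₁ : 0 ≤ 1 - 2 * χ - 2 * ζ - ξ := by linarith
  have d₂ : 0 ≤ 1 - 2 * χ + 4 * ζ - ξ := by linarith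
  have d₃ : 0 ≤ 10 * χ - 7 / 2 - 5 * ζ + ξ := by linarith
  have := rpow_self_pos hξ₁; have := rpow_self_pos d₁
  have := rpow_self_pos d₂; have := rpow_self_pos d₃
  have hnum : (2 : ℝ) ^ (2 * ξ) * (1 / 1.618) ^ ξ ≤ 2 ^ (2 : ℝ) * 1 := by
    gcongr ?_ * ?_
    · exact rpow_le_rpow_of_exponent_le one_le_two (by linarith)
    · exact rpow_le_one (by norm_num) (by norm_num) hξ₁
  have hden : exp (-1) * exp (-1) * exp (-1) * exp (-1)
      ≤ ξ ^ ξ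
      * (1 - 2 * χ - 2 * ζ - ξ) ^ (1 - 2 * χ - 2 * ζ - ξ)
      * (1 - 2 * χ + 4 * ζ - ξ) ^ (1 - 2 * χ + 4 * ζ - ξ)
      * (10 * χ - 7 / 2 - 5 * ζ + ξ) ^ (10 * χ - 7 / 2 - 5 * ζ + ξ) := by
    gcongr
    · exact exp_neg_one_le_rpow_self hξ₁
    · exact exp_neg_one_le_rpow_self d₁
    · exact exp_neg_one_le_rpow_self d₂
    · exact exp_neg_one_le_rpow_self d₃
  refine ⟨by unfold gfun; positivity,
    (div_le_div₀ (by positivity) hnum (by positivity) hden).trans_eq ?_⟩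
  rw [rpow_two, mul_one, ← exp_add, ← exp_add, ← exp_add, div_eq_mul_inv, ← exp_neg]
  norm_num

theorem hfun_nonneg_and_le (hp : (χ, ζ, ξ) ∈ Omega) :
    0 ≤ hfun χ ζ ξ ∧ hfun χ ζ ξ ≤ exp 20 * (4 * exp 4) := by
  obtain ⟨hχ, -, hζ₁, hζ₂, hξ₁, hξ₂⟩ := hp
  obtain ⟨hf₀, hf⟩ := ffun_nonneg_and_le hχ hζ₁ hζ₂
  obtain ⟨hg₀, hg⟩ := gfun_nonneg_and_le hχ hζ₁ hζ₂ hξ₁ hξ₂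
  exact ⟨mul_nonneg hf₀ hg₀, mul_le_mul hf hg hg₀ (exp_pos _).le⟩

theorem hfun_le_Msup (hp : (χ, ζ, ξ) ∈ Omega) : hfun χ ζ ξ ≤ Msup :=
  le_csSup ⟨_, by rintro _ ⟨q, hq, rfl⟩; exact (hfun_nonneg_and_le hq).2⟩ ⟨_, hp, rfl⟩

theorem Msup_nonneg : 0 ≤ Msup := by
  have hp : ((0.4545 : ℝ), (0 : ℝ), (0 : ℝ)) ∈ Omega := by
    refine ⟨?_, ?_, ?_, ?_, ?_, ?_⟩ <;> norm_num
  exact (hfun_nonneg_and_le hp).1.trans (hfun_le_Msup hp)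

theorem div_mem_Omega {n x i j : ℕ} (hx₁ : 0.454 * (n : ℝ) < x)
    (hx₂ : (x : ℝ) ≤ 0.45537 * n) (hi : 2 * (x + i) ≤ n) (hj : j + 2 * x + 2 * i ≤ n) :
    ((x / n : ℝ), (i / n : ℝ), (j / n : ℝ)) ∈ Omega := by
  have hn : (0 : ℝ) < n := by
    have : (0 : ℝ) ≤ x := x.cast_nonneg
    nlinarith
  have hi' : 2 * ((x : ℝ) + i) ≤ n := by exact_mod_cast hi
  have hj' : (j : ℝ) + 2 * x + 2 * i ≤ n := by exact_mod_cast hj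
  refine ⟨?_, ?_, by positivity, ?_, by positivity, ?_⟩
  · rw [lt_div_iff₀ hn]; linarith
  · rw [div_le_iff₀ hn]; linarith
  · rw [show (1 / 2 - x / n : ℝ) = (n - 2 * x) / (2 * n) by field_simp,
      div_le_div_iff₀ hn (by positivity)]
    nlinarith
  · rw [show (1 - 2 * (x / n) - 2 * (i / n) : ℝ) = (n - 2 * x - 2 * i) / n by field_simp,
      div_le_div_iff_of_pos_right hn]
    linarith

end Omega

theorem doubleFactorial_two_mul_sub_one_mul (k : ℕ) :
    ((2 * k - 1)‼ : ℝ) * (2 ^ k * k !) = (2 * k)! := by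
  rcases k with _ | k
  · simp
  · have h := Nat.factorial_eq_mul_doubleFactorial (2 * k + 1)
    rw [show 2 * k + 1 + 1 = 2 * (k + 1) by ring, Nat.doubleFactorial_two_mul] at h
    rw [show 2 * (k + 1) - 1 = 2 * k + 1 by omega, h]
    push_cast
    ring

noncomputable def qterm (n x i j : ℕ) : ℝ :=
  (n.choose (n / 2 - i) : ℝ) *
    (((n / 2 - i).factorial : ℝ) * (3 : ℝ) ^ (n - 2 * x - 2 * i) /
      (((2 * x + i - n / 2).factorial : ℝ) * (2 : ℝ) ^ (n / 2 - x - i) *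
        ((n / 2 - x - i).factorial : ℝ))) *
    (((n / 2 + i).factorial : ℝ) * (3 : ℝ) ^ (n - 2 * x + 4 * i) /
      (((2 * x - 3 * i - n / 2).factorial : ℝ) * (2 : ℝ) ^ (n / 2 - x + 2 * i) *
        ((n / 2 - x + 2 * i).factorial : ℝ))) *
    ((n - 2 * i - 2 * x).choose j : ℝ) * ((n - 2 * x + 4 * i).choose j : ℝ) *
    (2 : ℝ) ^ (2 * j) * (j.factorial : ℝ) * (1 / 1.618 : ℝ) ^ j *
    (((3 * (2 * x - n / 2 - 3 * i)).factorial : ℝ) *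
        ((3 * (2 * x - n / 2 + i)).factorial : ℝ) /
      ((3 * (2 * x - n / 2 - 3 * i) - 2 * (n - 2 * i - 2 * x) + j).factorial : ℝ))

theorem qfun_eq_sum_qterm (x n : ℕ) :
    qfun x n = ∑ i ∈ Finset.range (n / 2 - x + 1),
      ∑ j ∈ Finset.range (n - 2 * x - 2 * i + 1), qterm n x i j := rfl

def qtermNumArgs (u s i : ℕ) : List ℕ :=
  [4 * u + 2 * s + 10 * i, 2 * u, 2 * u + 6 * i, 3 * s, 3 * (s + 4 * i), 3 * (2 * u + s + 5 * i)]

def qtermDenArgs (u s i j : ℕ) : List ℕ :=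
  [s + 4 * i, u, s, u + 3 * i, j, 2 * u - j, 2 * u + 6 * i - j, 3 * s - 4 * u + j,
    3 * (4 * u + 2 * s + 10 * i)]

section Reparametrization

variable {n x i j u s : ℕ}

theorem ffun_pow (hn : n = 4 * u + 2 * s + 10 * i) (hx : x = u + s + 4 * i) (hn0 : n ≠ 0) :
    ffun (x / n) (i / n) ^ n
      = (3 ^ (2 * u + 3 * s + 9 * i))⁻¹ * scaledSelfPow n (2 * u)
          * scaledSelfPow n (2 * u + 6 * i) * scaledSelfPow n (3 * (s + 4 * i))
          * scaledSelfPow n (3 * s)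
        / (scaledSelfPow n (s + 4 * i) * 2 ^ (2 * u + 3 * i) * scaledSelfPow n u
          * scaledSelfPow n (u + 3 * i) * scaledSelfPow n s) := by
  conv_lhs => simp only [ffun, div_pow, mul_pow]
  rw [rpow_pow_of_mul_eq (m := -(2 * u + 3 * s + 9 * i : ℕ)) zero_le_three ?_,
    rpow_pow_of_mul_eq (m := (2 * u + 3 * i : ℕ)) zero_le_two ?_,
    rpow_neg zero_le_three, rpow_natCast, rpow_natCast,
    rpow_self_pow_of_eq_div (k := 2 * u) hn0 ?_,
    rpow_self_pow_of_eq_div (k := 2 * u + 6 * i) hn0 ?_,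
    rpow_self_pow_of_eq_div (k := 3 * (s + 4 * i)) hn0 ?_,
    rpow_self_pow_of_eq_div (k := 3 * s) hn0 ?_,
    rpow_self_pow_of_eq_div (k := s + 4 * i) hn0 ?_, rpow_self_pow_of_eq_div (k := u) hn0 ?_,
    rpow_self_pow_of_eq_div (k := u + 3 * i) hn0 ?_, rpow_self_pow_of_eq_div (k := s) hn0 ?_]
  all_goals subst hn hx; field_simp; push_cast; ring

theorem gfun_pow (hn : n = 4 * u + 2 * s + 10 * i) (hx : x = u + s + 4 * i) (hn0 : n ≠ 0)
    (hj : j ≤ 2 * u) (hs : 4 * u ≤ 3 * s) :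
    gfun (x / n) (i / n) (j / n) ^ n
      = 2 ^ (2 * j) * (1 / 1.618) ^ j
        / (scaledSelfPow n j * scaledSelfPow n (2 * u - j) * scaledSelfPow n (2 * u + 6 * i - j)
          * scaledSelfPow n (3 * s - 4 * u + j)) := by
  conv_lhs => simp only [gfun, div_pow, mul_pow]
  rw [rpow_pow_of_mul_eq (m := (2 * j : ℕ)) zero_le_two ?_,
    rpow_pow_of_mul_eq (m := (j : ℕ)) (by norm_num) ?_, rpow_natCast, rpow_natCast,
    rpow_self_pow_of_eq_div (k := j) hn0 ?_, rpow_self_pow_of_eq_div (k := 2 * u - j) hn0 ?_,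
    rpow_self_pow_of_eq_div (k := 2 * u + 6 * i - j) hn0 ?_,
    rpow_self_pow_of_eq_div (k := 3 * s - 4 * u + j) hn0 ?_]
  all_goals subst hn hx; field_simp
  all_goals
    push_cast [Nat.cast_sub hj, Nat.cast_sub hs, Nat.cast_sub (by omega : j ≤ 2 * u + 6 * i)]
    ring

theorem hfun_pow_eq (hn : n = 4 * u + 2 * s + 10 * i) (hx : x = u + s + 4 * i) (hn0 : n ≠ 0)
    (hj : j ≤ 2 * u) (hs : 4 * u ≤ 3 * s) :
    hfun (x / n) (i / n) (j / n) ^ n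
      = ((qtermNumArgs u s i).map (scaledSelfPow n)).prod
          / ((qtermDenArgs u s i j).map (scaledSelfPow n)).prod
        * (3 ^ (4 * u + 6 * i) * 2 ^ (2 * j + 4 * u + 3 * s + 12 * i) * (1 / 1.618) ^ j) := by
  have h₁ : scaledSelfPow n n = 1 := by
    rw [scaledSelfPow, div_self (by exact_mod_cast hn0), one_pow]
  have h₂ : scaledSelfPow n (3 * n) = 3 ^ (3 * n) := by
    simpa using scaledSelfPow_mul_mul 1 3 n hn0
  have h₃ : scaledSelfPow n (3 * (2 * u + s + 5 * i)) = (3 / 2) ^ (3 * (2 * u + s + 5 * i)) := by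
    rw [show n = 2 * (2 * u + s + 5 * i) by omega]
    exact_mod_cast scaledSelfPow_mul_mul 2 3 _ (by omega)
  have hconst : (3 / 2 : ℝ) ^ (3 * (2 * u + s + 5 * i)) * 3 ^ (4 * u + 6 * i)
      * 2 ^ (2 * j + 4 * u + 3 * s + 12 * i) / 3 ^ (3 * n)
      = (3 ^ (2 * u + 3 * s + 9 * i))⁻¹ * 2 ^ (2 * j) / 2 ^ (2 * u + 3 * i) := by
    subst hn
    rw [div_pow]
    field_simp
    ring
  rw [hfun, mul_pow, ffun_pow hn hx hn0, gfun_pow hn hx hn0 hj hs, qtermNumArgs, qtermDenArgs,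
    ← hn]
  simp only [List.map_cons, List.map_nil, List.prod_cons, List.prod_nil, h₁, h₂, h₃]
  linear_combination -(1 / 1.618 : ℝ) ^ j
    * (scaledSelfPow n (2 * u) * scaledSelfPow n (2 * u + 6 * i) * scaledSelfPow n (3 * s)
      * scaledSelfPow n (3 * (s + 4 * i)))
    / (scaledSelfPow n (s + 4 * i) * scaledSelfPow n u * scaledSelfPow n s
      * scaledSelfPow n (u + 3 * i) * scaledSelfPow n j * scaledSelfPow n (2 * u - j)
      * scaledSelfPow n (2 * u + 6 * i - j) * scaledSelfPow n (3 * s - 4 * u + j)) * hconst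

theorem qterm_div_doubleFactorial_eq (hn : n = 4 * u + 2 * s + 10 * i) (hx : x = u + s + 4 * i)
    (hj : j ≤ 2 * u) (hs : 4 * u ≤ 3 * s) :
    qterm n x i j / (3 * n - 1)‼
      = ((qtermNumArgs u s i).map fun k : ℕ => (k ! : ℝ)).prod
          / ((qtermDenArgs u s i j).map fun k : ℕ => (k ! : ℝ)).prod
        * (3 ^ (4 * u + 6 * i) * 2 ^ (2 * j + 4 * u + 3 * s + 12 * i) * (1 / 1.618) ^ j) := by
  subst hn hx
  have hdf := doubleFactorial_two_mul_sub_one_mul (3 * (2 * u + s + 5 * i))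
  rw [show 2 * (3 * (2 * u + s + 5 * i)) = 3 * (4 * u + 2 * s + 10 * i) by ring,
    ← eq_div_iff (by positivity)] at hdf
  rw [qterm, show (4 * u + 2 * s + 10 * i) / 2 = 2 * u + s + 5 * i by omega,
    show 2 * u + s + 5 * i - i = 2 * u + s + 4 * i by omega,
    show 2 * u + s + 5 * i + i = 2 * u + s + 6 * i by omega,
    show 4 * u + 2 * s + 10 * i - 2 * (u + s + 4 * i) - 2 * i = 2 * u by omega,
    show 2 * (u + s + 4 * i) + i - (2 * u + s + 5 * i) = s + 4 * i by omega,
    show 2 * u + s + 5 * i - (u + s + 4 * i) - i = u by omega,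
    show 4 * u + 2 * s + 10 * i - 2 * (u + s + 4 * i) + 4 * i = 2 * u + 6 * i by omega,
    show 2 * (u + s + 4 * i) - 3 * i - (2 * u + s + 5 * i) = s by omega,
    show 2 * u + s + 5 * i - (u + s + 4 * i) + 2 * i = u + 3 * i by omega,
    show 4 * u + 2 * s + 10 * i - 2 * i - 2 * (u + s + 4 * i) = 2 * u by omega,
    show 2 * (u + s + 4 * i) - (2 * u + s + 5 * i) - 3 * i = s by omega,
    show 2 * (u + s + 4 * i) - (2 * u + s + 5 * i) + i = s + 4 * i by omega,
    show 3 * s - 2 * (2 * u) + j = 3 * s - 4 * u + j by omega,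
    Nat.cast_choose ℝ (by omega : 2 * u + s + 4 * i ≤ 4 * u + 2 * s + 10 * i),
    show 4 * u + 2 * s + 10 * i - (2 * u + s + 4 * i) = 2 * u + s + 6 * i by omega,
    Nat.cast_choose ℝ hj, Nat.cast_choose ℝ (by omega : j ≤ 2 * u + 6 * i), hdf]
  simp only [qtermNumArgs, qtermDenArgs, List.map_cons, List.map_nil, List.prod_cons,
    List.prod_nil]
  field_simp
  ring

theorem qterm_div_doubleFactorial_le (hn : n = 4 * u + 2 * s + 10 * i) (hx : x = u + s + 4 * i)
    (hj : j ≤ 2 * u) (hs : 4 * u ≤ 3 * s) (hn0 : n ≠ 0) :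
    qterm n x i j / (3 * n - 1)‼
      ≤ (exp 1 * √(3 * n)) ^ 6 * hfun (x / n) (i / n) (j / n) ^ n := by
  have hsum : (qtermNumArgs u s i).sum = (qtermDenArgs u s i j).sum := by
    simp only [qtermNumArgs, qtermDenArgs, List.sum_cons, List.sum_nil]
    omega
  have hle : ∀ k ∈ qtermNumArgs u s i, k ≤ 3 * n := by
    intro k hk
    simp only [qtermNumArgs, List.mem_cons, List.not_mem_nil, or_false] at hk
    rcases hk with rfl | rfl | rfl | rfl | rfl | rfl <;> omega
  have hratio := prod_factorial_div_le hsum (by omega) hle hn0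
  rw [show (qtermNumArgs u s i).length = 6 from rfl, Nat.cast_mul, Nat.cast_ofNat] at hratio
  rw [qterm_div_doubleFactorial_eq hn hx hj hs, hfun_pow_eq hn hx hn0 hj hs,
    ← mul_assoc ((exp 1 * √(3 * n)) ^ 6)]
  exact mul_le_mul_of_nonneg_right hratio (by positivity)

end Reparametrization

theorem qterm_div_doubleFactorial_le_Msup {n x i j : ℕ} (hn : Even n)
    (hx₁ : 0.454 * (n : ℝ) < x) (hx₂ : (x : ℝ) ≤ 0.45537 * n) (hi : i ≤ n / 2 - x)
    (hj : j ≤ n - 2 * x - 2 * i) :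
    qterm n x i j / (3 * n - 1)‼ ≤ 27 * exp 6 * n ^ 3 * Msup ^ n := by
  obtain ⟨m, hm⟩ := hn
  have h2x : 2 * n < 5 * x := by
    have : (2 : ℝ) * n < 5 * x := by linarith [n.cast_nonneg (α := ℝ)]
    exact_mod_cast this
  have hxn : 2 * x ≤ n := by
    have : (2 : ℝ) * x ≤ n := by linarith [n.cast_nonneg (α := ℝ)]
    exact_mod_cast this
  have hΩ := div_mem_Omega (i := i) (j := j) hx₁ hx₂ (by omega) (by omega)
  have hsqrt : (exp 1 * √(3 * n)) ^ 6 = 27 * exp 6 * n ^ 3 := by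
    rw [mul_pow, show 6 = 2 * 3 by rfl, pow_mul (√_), sq_sqrt (by positivity), ← exp_nat_mul]
    norm_num
    ring
  calc qterm n x i j / (3 * n - 1)‼
      ≤ (exp 1 * √(3 * n)) ^ 6 * hfun (x / n) (i / n) (j / n) ^ n :=
        qterm_div_doubleFactorial_le (u := n / 2 - x - i) (s := 2 * x - 3 * i - n / 2)
          (by omega) (by omega) (by omega) (by omega) (by omega)
    _ ≤ 27 * exp 6 * n ^ 3 * Msup ^ n := by
        rw [hsqrt]
        gcongr
        · exact (hfun_nonneg_and_le hΩ).1
        · exact hfun_le_Msup hΩ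

theorem qfun_div_doubleFactorial_le {n x : ℕ} (hn : Even n) (hn₀ : 0 < n)
    (hx₁ : 0.454 * (n : ℝ) < x) (hx₂ : (x : ℝ) ≤ 0.45537 * n) :
    qfun x n / (3 * n - 1)‼ ≤ 27 * exp 6 * n ^ 5 * Msup ^ n := by
  have hx₀ : 0 < x := by
    have : (0 : ℝ) < x := by nlinarith [(Nat.cast_pos (α := ℝ)).mpr hn₀]
    exact_mod_cast this
  set B := 27 * exp 6 * (n : ℝ) ^ 3 * Msup ^ n
  have hB : 0 ≤ B := by have := Msup_nonneg; positivity
  have hrow : ∀ i ∈ Finset.range (n / 2 - x + 1),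
      ∑ j ∈ Finset.range (n - 2 * x - 2 * i + 1), qterm n x i j / (3 * n - 1)‼ ≤ n * B := by
    intro i hi
    rw [Finset.mem_range] at hi
    refine (Finset.sum_le_card_nsmul _ _ B fun j hj => ?_).trans ?_
    · rw [Finset.mem_range] at hj
      exact qterm_div_doubleFactorial_le_Msup hn hx₁ hx₂ (by omega) (by omega)
    · rw [Finset.card_range, nsmul_eq_mul]
      exact mul_le_mul_of_nonneg_right (by exact_mod_cast (by omega : _ ≤ n)) hB
  calc qfun x n / (3 * n - 1)‼
      = ∑ i ∈ Finset.range (n / 2 - x + 1), ∑ j ∈ Finset.range (n - 2 * x - 2 * i + 1),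
          qterm n x i j / (3 * n - 1)‼ := by
        simp only [qfun_eq_sum_qterm, Finset.sum_div]
    _ ≤ n * (n * B) := by
        refine (Finset.sum_le_card_nsmul _ _ _ hrow).trans ?_
        rw [Finset.card_range, nsmul_eq_mul]
        exact mul_le_mul_of_nonneg_right (by exact_mod_cast (by omega : _ ≤ n)) (by positivity)
    _ = 27 * exp 6 * n ^ 5 * Msup ^ n := by ring

theorem q_div_doubleFactorial_le :
    ∃ C : ℝ, 0 < C ∧ ∀ n x : ℕ, Even n → 0 < n →
      0.454 * (n : ℝ) < (x : ℝ) → (x : ℝ) ≤ 0.45537 * (n : ℝ) →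
        qfun x n / (Nat.doubleFactorial (3 * n - 1) : ℝ)
          ≤ C * (n : ℝ) ^ 6 * Msup ^ n := by
  refine ⟨27 * exp 6, by positivity, fun n x hn hn₀ hx₁ hx₂ => ?_⟩
  have := Msup_nonneg
  calc qfun x n / (3 * n - 1)‼ ≤ 27 * exp 6 * n ^ 5 * Msup ^ n :=
        qfun_div_doubleFactorial_le hn hn₀ hx₁ hx₂
    _ ≤ 27 * exp 6 * n ^ 6 * Msup ^ n := by
        gcongr
        exacts [by exact_mod_cast hn₀, by norm_num]
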